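/- arXiv:1309.1822 — 5 statements merged into one kernel-verified Lean document; each statement's English description precedes it below -/
import Mathlib

section
/- Let θ ∈ {1, −1} and let B be an associative unital ℂ-algebra containing families of elements q_{ai}, p_{ai} (for 1 ≤ a ≤ m, 1 ≤ i ≤ n) satisfying q_{ai}q_{bj} = θ q_{bj}q_{ai}, p_{ai}p_{bj} = θ p_{bj}p_{ai}, and p_{ai}q_{bj} − θ q_{bj}p_{ai} = δ_{ab}δ_{ij}·1. For 1 ≤ a,b ≤ m define ζ(E_{ab}) = θ δ_{ab}(n/2)·1 + ∑_{k=1}^{n} q_{ak}p_{bk}. Then the elements ζ(E_{ab}) satisfy the commutation relations of the Lie algebra gl_m: [ζ(E_{ab}), ζ(E_{cd})] = δ_{bc} ζ(E_{ad}) − δ_{da} ζ(E_{cb}) for all a,b,c,d ∈ {1,…,m}. -/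
lemma zeta_key_lemma {B : Type*} [Ring B] (θ x1 x2 y1 y2 e1 e2 : B)
    (hθc : ∀ z : B, θ * z = z * θ)
    (hθθ : θ * θ = 1)
    (he1c : ∀ z : B, e1 * z = z * e1)
    (he2c : ∀ z : B, e2 * z = z * e2)
    (hq : x1 * y1 = θ * (y1 * x1))
    (hp : x2 * y2 = θ * (y2 * x2))
    (h1 : x2 * y1 = θ * (y1 * x2) + e1)
    (h2 : y2 * x1 = θ * (x1 * y2) + e2) :
    x1 * x2 * (y1 * y2) = y1 * y2 * (x1 * x2) + e1 * (x1 * y2) - e2 * (y1 * x2) := by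
  have hc2 : ∀ u v : B, u * (θ * v) = θ * (u * v) := fun u v => by
    rw [← mul_assoc, ← hθc, mul_assoc]
  have h2' : θ * (x1 * y2) = y2 * x1 - e2 := by rw [h2]; abel
  calc x1 * x2 * (y1 * y2)
      = x1 * (x2 * y1) * y2 := by noncomm_ring
    _ = x1 * (θ * (y1 * x2) + e1) * y2 := by rw [h1]
    _ = x1 * (θ * (y1 * x2)) * y2 + x1 * e1 * y2 := by noncomm_ring
    _ = θ * (x1 * y1) * (x2 * y2) + e1 * (x1 * y2) := by
        rw [hc2, ← he1c]; noncomm_ring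
    _ = y1 * x1 * (x2 * y2) + e1 * (x1 * y2) := by
        rw [hq, ← mul_assoc θ θ, hθθ, one_mul]
    _ = y1 * x1 * (θ * (y2 * x2)) + e1 * (x1 * y2) := by rw [hp]
    _ = y1 * (θ * (x1 * y2)) * x2 + e1 * (x1 * y2) := by
        rw [hc2, hc2]; noncomm_ring
    _ = y1 * (y2 * x1 - e2) * x2 + e1 * (x1 * y2) := by rw [h2']
    _ = y1 * y2 * (x1 * x2) + e1 * (x1 * y2) - y1 * e2 * x2 := by noncomm_ring
    _ = y1 * y2 * (x1 * x2) + e1 * (x1 * y2) - e2 * (y1 * x2) := by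
        rw [← he2c]; noncomm_ring

lemma zeta_sum_aux {B : Type*} [Ring B] {n : ℕ} (P : Prop) [Decidable P]
    (f : Fin n → Fin n → B) :
    (∑ k, ∑ l, if P ∧ k = l then f k l else 0) = if P then ∑ k, f k k else 0 := by
  by_cases hP : P <;> simp [hP, Finset.sum_ite_eq]

lemma zeta_sum_aux' {B : Type*} [Ring B] {n : ℕ} (P : Prop) [Decidable P]
    (f : Fin n → Fin n → B) :
    (∑ k, ∑ l, if P ∧ l = k then f k l else 0) = if P then ∑ k, f k k else 0 := by
  by_cases hP : P <;> simp [hP, Finset.sum_ite_eq']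

lemma zeta_sum_comm {B : Type*} [Ring B] {m n : ℕ} (θ : B)
    (hθc : ∀ z : B, θ * z = z * θ) (hθθ : θ * θ = 1)
    (q p : Fin m → Fin n → B)
    (hqq : ∀ a b i j, q a i * q b j = θ * (q b j * q a i))
    (hpp : ∀ a b i j, p a i * p b j = θ * (p b j * p a i))
    (hpq : ∀ a b i j, p a i * q b j - θ * (q b j * p a i) =
      if a = b ∧ i = j then (1 : B) else 0)
    (a b c d : Fin m) :
    (∑ k, q a k * p b k) * (∑ k, q c k * p d k)
      - (∑ k, q c k * p d k) * (∑ k, q a k * p b k)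
    = (if b = c then ∑ k, q a k * p d k else 0)
      - (if d = a then ∑ k, q c k * p b k else 0) := by
  have hterm : ∀ k l : Fin n, (q a k * p b k) * (q c l * p d l)
      = (q c l * p d l) * (q a k * p b k)
        + (if b = c ∧ k = l then q a k * p d l else 0)
        - (if d = a ∧ l = k then q c l * p b k else 0) := by
    intro k l
    have h1 := hpq b c k l
    rw [sub_eq_iff_eq_add'] at h1
    have h2 := hpq d a l k
    rw [sub_eq_iff_eq_add'] at h2
    have he1c : ∀ z : B, (if b = c ∧ k = l then (1:B) else 0) * z
        = z * (if b = c ∧ k = l then (1:B) else 0) := by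
      intro z; split <;> simp
    have he2c : ∀ z : B, (if d = a ∧ l = k then (1:B) else 0) * z
        = z * (if d = a ∧ l = k then (1:B) else 0) := by
      intro z; split <;> simp
    have hk := zeta_key_lemma θ (q a k) (p b k) (q c l) (p d l) _ _
      hθc hθθ he1c he2c (hqq a c k l) (hpp b d k l) h1 h2
    rw [hk]
    simp [ite_mul]
  rw [Finset.sum_mul_sum, Finset.sum_mul_sum]
  calc (∑ k, ∑ l, (q a k * p b k) * (q c l * p d l))
        - (∑ l, ∑ k, (q c l * p d l) * (q a k * p b k))
      = (∑ k, ∑ l, ((q c l * p d l) * (q a k * p b k)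
          + (if b = c ∧ k = l then q a k * p d l else 0)
          - (if d = a ∧ l = k then q c l * p b k else 0)))
        - (∑ l, ∑ k, (q c l * p d l) * (q a k * p b k)) := by
        rw [Finset.sum_congr rfl fun k _ => Finset.sum_congr rfl fun l _ => hterm k l]
    _ = (∑ k, ∑ l, (q c l * p d l) * (q a k * p b k))
        + (∑ k, ∑ l, if b = c ∧ k = l then q a k * p d l else 0)
        - (∑ k, ∑ l, if d = a ∧ l = k then q c l * p b k else 0)
        - (∑ l, ∑ k, (q c l * p d l) * (q a k * p b k)) := by
        simp [Finset.sum_add_distrib, Finset.sum_sub_distrib]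
    _ = (if b = c then ∑ k, q a k * p d k else 0)
        - (if d = a then ∑ k, q c k * p b k else 0) := by
        rw [zeta_sum_aux (b = c), zeta_sum_aux' (d = a), Finset.sum_comm]
        abel

/-- The elements `ζ(E_{ab}) = θ δ_{ab}(n/2)·1 + ∑_k q_{ak}p_{bk}` satisfy the
commutation relations of the Lie algebra `gl_m`. -/
theorem zeta_glm_relations {B : Type*} [Ring B] [Algebra ℂ B] (m n : ℕ)
    (θ : B) (hθ : θ = 1 ∨ θ = -1)
    (q p : Fin m → Fin n → B)
    (hqq : ∀ a b i j, q a i * q b j = θ * (q b j * q a i))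
    (hpp : ∀ a b i j, p a i * p b j = θ * (p b j * p a i))
    (hpq : ∀ a b i j, p a i * q b j - θ * (q b j * p a i) =
      if a = b ∧ i = j then (1 : B) else 0)
    (ζ : Fin m → Fin m → B)
    (hζ : ∀ a b, ζ a b =
      θ * ((if a = b then (n : ℂ) / 2 else 0) • (1 : B)) + ∑ k, q a k * p b k) :
    ∀ a b c d : Fin m,
      ζ a b * ζ c d - ζ c d * ζ a b =
        (if b = c then ζ a d else 0) - (if d = a then ζ c b else 0) := by
  have hθc : ∀ z : B, θ * z = z * θ := by
    rcases hθ with h | h <;> subst h <;> intro z <;> simp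
  have hθθ : θ * θ = 1 := by
    rcases hθ with h | h <;> subst h <;> simp
  have hsc : ∀ (x y : Fin m) (z : B),
      (θ * ((if x = y then (n : ℂ) / 2 else 0) • (1 : B))) * z
        = z * (θ * ((if x = y then (n : ℂ) / 2 else 0) • (1 : B))) := by
    intro x y z
    have hw : ((if x = y then (n : ℂ) / 2 else 0) • (1 : B)) * z
        = z * ((if x = y then (n : ℂ) / 2 else 0) • (1 : B)) := by
      rw [smul_mul_assoc, one_mul, mul_smul_comm, mul_one]
    rw [mul_assoc, hw, ← mul_assoc, hθc z, mul_assoc]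
  intro a b c d
  have expand : ζ a b * ζ c d - ζ c d * ζ a b =
      (∑ k, q a k * p b k) * (∑ k, q c k * p d k)
        - (∑ k, q c k * p d k) * (∑ k, q a k * p b k) := by
    rw [hζ a b, hζ c d]
    set s1 := θ * ((if a = b then (n : ℂ) / 2 else 0) • (1 : B)) with hs1
    set s2 := θ * ((if c = d then (n : ℂ) / 2 else 0) • (1 : B)) with hs2
    set A := ∑ k, q a k * p b k with hA
    set C := ∑ k, q c k * p d k with hC
    have c1 : ∀ z : B, s1 * z = z * s1 := by rw [hs1]; exact hsc a b
    have c2 : ∀ z : B, s2 * z = z * s2 := by rw [hs2]; exact hsc c d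
    have hexp : (s1 + A) * (s2 + C) - (s2 + C) * (s1 + A)
        = (s1 * s2 - s2 * s1) + (s1 * C - C * s1) + (A * s2 - s2 * A)
          + (A * C - C * A) := by noncomm_ring
    rw [hexp, c1 s2, c1 C, c2 A]
    abel
  rw [expand, zeta_sum_comm θ hθc hθθ q p hqq hpp hpq a b c d]
  by_cases hbc : b = c <;> by_cases hda : d = a
  · subst hda; subst hbc
    simp [hζ]
  · have hda' : ¬ a = d := fun h => hda h.symm
    simp [hbc, hda, hda', hζ]
  · have hbc' : ¬ c = b := fun h => hbc h.symm
    simp [hbc, hda, hbc', hζ]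
  · simp [hbc, hda]
end

section
/- Let θ ∈ {1, −1} and let B be an associative unital ring containing families of elements q_{ai}, p_{ai} (for 1 ≤ a ≤ m, 1 ≤ i ≤ n) satisfying q_{ai}q_{bj} = θ q_{bj}q_{ai}, p_{ai}p_{bj} = θ p_{bj}p_{ai}, and p_{ai}q_{bj} − θ q_{bj}p_{ai} = δ_{ab}δ_{ij}·1. Define L_{ab} = ∑_{k=1}^{n} q_{ak}p_{bk} for 1 ≤ a,b ≤ m and η_{ij} = ∑_{c=1}^{m} q_{ci}p_{cj} for 1 ≤ i,j ≤ n. Then the two families commute: [L_{ab}, η_{ij}] = 0 for all a,b ∈ {1,…,m} and i,j ∈ {1,…,n}. -/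
/-- Key single-term commutator computation. -/
lemma key_term_comm {B : Type*} [Ring B] (θ A P Q R d e : B)
    (hθ : θ = 1 ∨ θ = -1)
    (hqq : A * Q = θ * (Q * A)) (hpp : P * R = θ * (R * P))
    (h1 : P * Q = θ * (Q * P) + d) (h2 : R * A = θ * (A * R) + e) :
    A * P * (Q * R) - Q * R * (A * P) = A * d * R - Q * e * P := by
  have h3 : A * Q * (P * R) = Q * A * (R * P) := by
    rcases hθ with h | h <;> subst h <;> rw [hqq, hpp] <;> noncomm_ring
  have e1 : A * P * (Q * R) = θ * (A * Q * (P * R)) + A * d * R := by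
    calc A * P * (Q * R) = A * (P * Q) * R := by noncomm_ring
      _ = A * (θ * (Q * P) + d) * R := by rw [h1]
      _ = A * (θ * (Q * P)) * R + A * d * R := by noncomm_ring
      _ = θ * (A * Q * (P * R)) + A * d * R := by
          rcases hθ with h | h <;> subst h <;> noncomm_ring
  have e2 : Q * R * (A * P) = θ * (Q * A * (R * P)) + Q * e * P := by
    calc Q * R * (A * P) = Q * (R * A) * P := by noncomm_ring
      _ = Q * (θ * (A * R) + e) * P := by rw [h2]
      _ = Q * (θ * (A * R)) * P + Q * e * P := by noncomm_ring
      _ = θ * (Q * A * (R * P)) + Q * e * P := by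
          rcases hθ with h | h <;> subst h <;> noncomm_ring
  rw [e1, e2, h3]
  noncomm_ring

/-- The `gl_m`-type operators `L_{ab} = ∑_k q_{ak}p_{bk}` commute with the
`gl_n`-type operators `η_{ij} = ∑_c q_{ci}p_{cj}` (Howe duality commuting actions). -/
theorem L_eta_commute {B : Type*} [Ring B] (m n : ℕ) (θ : B) (hθ : θ = 1 ∨ θ = -1)
    (q p : Fin m → Fin n → B)
    (hqq : ∀ a b i j, q a i * q b j = θ * (q b j * q a i))
    (hpp : ∀ a b i j, p a i * p b j = θ * (p b j * p a i))
    (hpq : ∀ a b i j, p a i * q b j - θ * (q b j * p a i) =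
      if a = b ∧ i = j then (1 : B) else 0)
    (L : Fin m → Fin m → B) (hL : ∀ a b, L a b = ∑ k, q a k * p b k)
    (η : Fin n → Fin n → B) (hη : ∀ i j, η i j = ∑ c, q c i * p c j) :
    ∀ (a b : Fin m) (i j : Fin n), L a b * η i j - η i j * L a b = 0 := by
  intro a b i j
  rw [hL, hη, Finset.sum_mul_sum, Finset.sum_mul_sum]
  rw [Finset.sum_comm (f := fun c k => (q c i * p c j) * (q a k * p b k))]
  rw [← Finset.sum_sub_distrib]
  simp_rw [← Finset.sum_sub_distrib]
  have hterm : ∀ (k : Fin n) (c : Fin m),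
      (q a k * p b k) * (q c i * p c j) - (q c i * p c j) * (q a k * p b k)
      = q a k * (if b = c ∧ k = i then (1 : B) else 0) * p c j
        - q c i * (if c = a ∧ j = k then (1 : B) else 0) * p b k := by
    intro k c
    exact key_term_comm θ (q a k) (p b k) (q c i) (p c j) _ _ hθ
      (hqq a c k i) (hpp b c k j)
      (sub_eq_iff_eq_add'.mp (hpq b c k i))
      (sub_eq_iff_eq_add'.mp (hpq c a j k))
  simp_rw [hterm, mul_ite, ite_mul, mul_one, mul_zero, zero_mul]
  simp [Finset.sum_ite_eq, Finset.sum_ite_eq', ite_and, Finset.sum_sub_distrib]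
end

section
/- Let θ ∈ {1, −1} and let B be an associative unital ring containing: (a) elements e_{ab} (1 ≤ a,b ≤ m) satisfying the gl_m relations [e_{ab}, e_{cd}] = δ_{bc}e_{ad} − δ_{da}e_{cb}; (b) elements q_{ai}, p_{ai} (1 ≤ a ≤ m, 1 ≤ i ≤ n) satisfying q_{ai}q_{bj} = θ q_{bj}q_{ai}, p_{ai}p_{bj} = θ p_{bj}p_{ai}, p_{ai}q_{bj} − θ q_{bj}p_{ai} = δ_{ab}δ_{ij}·1; and such that every e_{ab} commutes with every q_{ci} and every p_{ci}. Let A be the m×m matrix over B with entries A_{ab} = −θ e_{ba}. Define T^{(0)}_{ij} = δ_{ij}·1 and, for r ≥ 1, T^{(r)}_{ij} = ∑_{a,b=1}^{m} (A^{r−1})_{ab} · q_{ai} p_{bj}. Then the Yangian coefficient relations hold: for all r,t ≥ 0 and all i,j,k,l ∈ {1,…,n}, [T^{(r+1)}_{ij}, T^{(t)}_{kl}] − [T^{(r)}_{ij}, T^{(t+1)}_{kl}] = T^{(r)}_{kj} T^{(t)}_{il} − T^{(t)}_{kj} T^{(r)}_{il}. -/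
set_option maxHeartbeats 1600000

section YangianAux
variable {B : Type*} [Ring B] {m n : ℕ}

lemma com_expand_right (z x y : B) :
    z * (x * y) - x * y * z = x * (z * y - y * z) + (z * x - x * z) * y := by
  noncomm_ring

lemma com_expand_left (x y z : B) :
    x * y * z - z * (x * y) = x * (y * z - z * y) + (x * z - z * x) * y := by
  noncomm_ring

lemma theta_mul_theta_mul (θ : B) (h2 : θ * θ = 1) (hc : ∀ x : B, θ * x = x * θ)
    (x y : B) : (θ * x) * (θ * y) = x * y := by
  rw [mul_assoc, ← mul_assoc x θ y, ← hc x, ← mul_assoc, ← mul_assoc, h2, one_mul]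

lemma mul_theta_assoc (θ : B) (hc : ∀ x : B, θ * x = x * θ) (x y : B) :
    x * (θ * y) = θ * (x * y) := by
  rw [← mul_assoc, ← hc x, mul_assoc]

lemma theta_theta (θ : B) (h2 : θ * θ = 1) (x : B) : θ * (θ * x) = x := by
  rw [← mul_assoc, h2, one_mul]

lemma pow_zero_apply (A : Matrix (Fin m) (Fin m) B) (a b : Fin m) :
    (A ^ 0) a b = if a = b then (1:B) else 0 := by
  simp [Matrix.one_apply]

lemma pow_succ_apply (A : Matrix (Fin m) (Fin m) B) (s : ℕ) (a b : Fin m) :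
    (A ^ (s+1)) a b = ∑ x, (A ^ s) a x * A x b := by
  rw [pow_succ, Matrix.mul_apply]

lemma pow_add_apply (A : Matrix (Fin m) (Fin m) B) (r s : ℕ) (a b : Fin m) :
    (A ^ (r+s)) a b = ∑ x, (A ^ r) a x * (A ^ s) x b := by
  rw [pow_add, Matrix.mul_apply]


lemma comAA (θ : B) (h2 : θ * θ = 1) (hc : ∀ x : B, θ * x = x * θ)
    (e : Fin m → Fin m → B)
    (he : ∀ a b c d, e a b * e c d - e c d * e a b =
      (if b = c then e a d else 0) - (if d = a then e c b else 0))
    (A : Matrix (Fin m) (Fin m) B) (hA : ∀ a b, A a b = -(θ * e b a))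
    (a b c d : Fin m) :
    A a b * A c d - A c d * A a b
      = -(θ * ((if a = d then A c b else 0) - (if c = b then A a d else 0))) := by
  have lhs : A a b * A c d - A c d * A a b = e b a * e d c - e d c * e b a := by
    simp only [hA, neg_mul_neg, theta_mul_theta_mul θ h2 hc]
  rw [lhs, he]
  simp only [hA, mul_sub, mul_ite, mul_zero, mul_neg, ← mul_assoc, h2, one_mul,
    neg_neg, neg_sub, sub_neg_eq_add, neg_zero]
  split_ifs <;> abel

lemma comApow (θ : B) (h2 : θ * θ = 1) (hc : ∀ x : B, θ * x = x * θ)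
    (e : Fin m → Fin m → B)
    (he : ∀ a b c d, e a b * e c d - e c d * e a b =
      (if b = c then e a d else 0) - (if d = a then e c b else 0))
    (A : Matrix (Fin m) (Fin m) B) (hA : ∀ a b, A a b = -(θ * e b a))
    (s : ℕ) (a b c d : Fin m) :
    A a b * (A ^ s) c d - (A ^ s) c d * A a b
      = -(θ * ((if a = d then (A ^ s) c b else 0) - (if c = b then (A ^ s) a d else 0))) := by
  induction s generalizing a b c d with
  | zero =>
    simp only [pow_zero_apply]
    split_ifs <;> simp_all
  | succ s ih =>
    rw [pow_succ_apply, pow_succ_apply, pow_succ_apply, Finset.mul_sum, Finset.sum_mul,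
      ← Finset.sum_sub_distrib]
    have step : ∀ x : Fin m, x ∈ (Finset.univ : Finset (Fin m)) →
        A a b * ((A ^ s) c x * A x d) - (A ^ s) c x * A x d * A a b
        = -(θ * ((if a = d then (A ^ s) c x * A x b else 0)
              - (if x = b then (A ^ s) c x * A a d else 0)))
          + -(θ * ((if a = x then (A ^ s) c b * A x d else 0)
              - (if c = b then (A ^ s) a x * A x d else 0))) := by
      intro x _
      rw [com_expand_right (A a b) ((A ^ s) c x) (A x d),
        comAA θ h2 hc e he A hA a b x d, ih a b c x]
      simp only [mul_neg, neg_mul, mul_theta_assoc θ hc, mul_sub, sub_mul, mul_ite, ite_mul,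
        mul_zero, zero_mul, mul_assoc]
    rw [Finset.sum_congr rfl step, Finset.sum_add_distrib]
    have h1 : (∑ x, -(θ * ((if a = d then (A ^ s) c x * A x b else 0)
              - (if x = b then (A ^ s) c x * A a d else 0))))
        = -(θ * ((if a = d then ∑ x, (A ^ s) c x * A x b else 0) - (A ^ s) c b * A a d)) := by
      rw [Finset.sum_neg_distrib, ← Finset.mul_sum, Finset.sum_sub_distrib]
      congr 3
      · rw [Finset.sum_ite_irrel, Finset.sum_const_zero]
      · simp [Finset.sum_ite_eq']
    have h2 : (∑ x, -(θ * ((if a = x then (A ^ s) c b * A x d else 0)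
              - (if c = b then (A ^ s) a x * A x d else 0))))
        = -(θ * ((A ^ s) c b * A a d - (if c = b then ∑ x, (A ^ s) a x * A x d else 0))) := by
      rw [Finset.sum_neg_distrib, ← Finset.mul_sum, Finset.sum_sub_distrib]
      congr 3
      · simp [Finset.sum_ite_eq]
      · rw [Finset.sum_ite_irrel, Finset.sum_const_zero]
    rw [h1, h2, ← neg_add, ← mul_add, sub_add_sub_cancel]

lemma comPowPow (θ : B) (h2 : θ * θ = 1) (hc : ∀ x : B, θ * x = x * θ)
    (A : Matrix (Fin m) (Fin m) B)
    (hAp : ∀ (s : ℕ) (a b c d : Fin m),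
      A a b * (A ^ s) c d - (A ^ s) c d * A a b
      = -(θ * ((if a = d then (A ^ s) c b else 0) - (if c = b then (A ^ s) a d else 0))))
    (r s : ℕ) (a b c d : Fin m) :
    (A ^ r) a b * (A ^ s) c d - (A ^ s) c d * (A ^ r) a b
      = -(θ * ∑ u ∈ Finset.range r,
          ((A ^ u) a d * (A ^ (r-1-u+s)) c b - (A ^ (r-1-u+s)) a d * (A ^ u) c b)) := by
  induction r generalizing a b c d with
  | zero =>
    rw [Finset.range_zero, Finset.sum_empty, mul_zero, neg_zero, pow_zero_apply]
    split_ifs <;> simp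
  | succ r ih =>
    rw [pow_succ_apply A r a b, Finset.sum_mul, Finset.mul_sum, ← Finset.sum_sub_distrib]
    have step : ∀ x ∈ (Finset.univ : Finset (Fin m)),
        (A ^ r) a x * A x b * (A ^ s) c d - (A ^ s) c d * ((A ^ r) a x * A x b)
        = -(θ * ((if x = d then (A ^ r) a x * (A ^ s) c b else 0)
              - (if c = b then (A ^ r) a x * (A ^ s) x d else 0)))
          + -(θ * ∑ u ∈ Finset.range r,
              ((A ^ u) a d * ((A ^ (r-1-u+s)) c x * A x b)
                - (A ^ (r-1-u+s)) a d * ((A ^ u) c x * A x b))) := by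
      intro x _
      rw [com_expand_left ((A ^ r) a x) (A x b) ((A ^ s) c d),
        hAp s x b c d, ih a x c d]
      congr 1
      · simp only [mul_neg, mul_theta_assoc θ hc, mul_sub, mul_ite, mul_zero]
      · simp only [neg_mul, mul_theta_assoc θ hc, Finset.sum_mul, sub_mul, mul_assoc]
    rw [Finset.sum_congr rfl step, Finset.sum_add_distrib]
    have h1 : (∑ x, -(θ * ((if x = d then (A ^ r) a x * (A ^ s) c b else 0)
              - (if c = b then (A ^ r) a x * (A ^ s) x d else 0))))
        = -(θ * ((A ^ r) a d * (A ^ s) c b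
              - (if c = b then (A ^ (r+s)) a d else 0))) := by
      rw [Finset.sum_neg_distrib, ← Finset.mul_sum, Finset.sum_sub_distrib]
      congr 3
      · simp [Finset.sum_ite_eq']
      · rw [Finset.sum_ite_irrel, Finset.sum_const_zero, pow_add_apply]
    have h2 : (∑ x, -(θ * ∑ u ∈ Finset.range r,
              ((A ^ u) a d * ((A ^ (r-1-u+s)) c x * A x b)
                - (A ^ (r-1-u+s)) a d * ((A ^ u) c x * A x b))))
        = -(θ * ∑ u ∈ Finset.range r,
              ((A ^ u) a d * (A ^ (r-1-u+s+1)) c b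
                - (A ^ (r-1-u+s)) a d * (A ^ (u+1)) c b)) := by
      rw [Finset.sum_neg_distrib, ← Finset.mul_sum]
      congr 2
      rw [Finset.sum_comm]
      refine Finset.sum_congr rfl fun u _ => ?_
      rw [Finset.sum_sub_distrib, ← Finset.mul_sum, ← Finset.mul_sum,
        ← pow_succ_apply, ← pow_succ_apply]
    rw [h1, h2, ← neg_add, ← mul_add]
    congr 1
    congr 1
    rw [Finset.sum_sub_distrib, Finset.sum_sub_distrib, Finset.sum_range_succ,
      Finset.sum_range_succ']
    have e1 : ∀ u ∈ Finset.range r, (A ^ u) a d * (A ^ (r+1-1-u+s)) c b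
        = (A ^ u) a d * (A ^ (r-1-u+s+1)) c b := by
      intro u hu
      have : r+1-1-u+s = r-1-u+s+1 := by
        have := Finset.mem_range.mp hu; omega
      rw [this]
    have e2 : ∀ u ∈ Finset.range r, (A ^ (r+1-1-(u+1)+s)) a d * (A ^ (u+1)) c b
        = (A ^ (r-1-u+s)) a d * (A ^ (u+1)) c b := by
      intro u _
      have : r+1-1-(u+1)+s = r-1-u+s := by omega
      rw [this]
    rw [Finset.sum_congr rfl e1, Finset.sum_congr rfl e2]
    have e3 : (A ^ (r+1-1-r+s)) c b = (A ^ s) c b := by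
      have : r+1-1-r+s = s := by omega
      rw [this]
    have e4 : (A ^ (r+1-1-0+s)) a d * (A ^ 0) c b
        = if c = b then (A ^ (r+s)) a d else 0 := by
      have : r+1-1-0+s = r+s := by omega
      rw [this, pow_zero_apply, mul_ite, mul_one, mul_zero]
    rw [e3, e4]
    abel

lemma comPow_sym (θ : B) (A : Matrix (Fin m) (Fin m) B)
    (hPP : ∀ (r s : ℕ) (a b c d : Fin m),
      (A ^ r) a b * (A ^ s) c d - (A ^ s) c d * (A ^ r) a b
      = -(θ * ∑ u ∈ Finset.range r,
          ((A ^ u) a d * (A ^ (r-1-u+s)) c b - (A ^ (r-1-u+s)) a d * (A ^ u) c b))) :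
    ∀ (N s r : ℕ), s + r = N → ∀ (a b c d : Fin m),
      ((A ^ s) a b * (A ^ r) c d - (A ^ r) c d * (A ^ s) a b)
      + ((A ^ s) c d * (A ^ r) a b - (A ^ r) a b * (A ^ s) c d) = 0 := by
  intro N
  induction N using Nat.strong_induction_on with
  | _ N ih =>
    intro s r hsr a b c d
    match s with
    | 0 =>
      simp only [pow_zero, Matrix.one_apply]
      split_ifs <;> simp
    | (s' + 1) =>
      rw [hPP (s'+1) r a b c d, hPP (s'+1) r c d a b, ← neg_add, ← mul_add,
        ← Finset.sum_add_distrib]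
      have key : ∀ u ∈ Finset.range (s'+1),
          ((A ^ u) a d * (A ^ (s'+1-1-u+r)) c b - (A ^ (s'+1-1-u+r)) a d * (A ^ u) c b)
          + ((A ^ u) c b * (A ^ (s'+1-1-u+r)) a d - (A ^ (s'+1-1-u+r)) c b * (A ^ u) a d)
          = 0 := by
        intro u hu
        have hu' : u < s' + 1 := Finset.mem_range.mp hu
        have h0 := ih (u + (s'+1-1-u+r)) (by omega) u (s'+1-1-u+r) rfl a d c b
        calc ((A ^ u) a d * (A ^ (s'+1-1-u+r)) c b - (A ^ (s'+1-1-u+r)) a d * (A ^ u) c b)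
              + ((A ^ u) c b * (A ^ (s'+1-1-u+r)) a d - (A ^ (s'+1-1-u+r)) c b * (A ^ u) a d)
            = ((A ^ u) a d * (A ^ (s'+1-1-u+r)) c b - (A ^ (s'+1-1-u+r)) c b * (A ^ u) a d)
              + ((A ^ u) c b * (A ^ (s'+1-1-u+r)) a d - (A ^ (s'+1-1-u+r)) a d * (A ^ u) c b) := by
              abel
          _ = 0 := h0
      rw [Finset.sum_congr rfl key, Finset.sum_const_zero, mul_zero, neg_zero]

/-- telescope -/

lemma comPow_tel (θ : B) (A : Matrix (Fin m) (Fin m) B)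
    (hPP : ∀ (r s : ℕ) (a b c d : Fin m),
      (A ^ r) a b * (A ^ s) c d - (A ^ s) c d * (A ^ r) a b
      = -(θ * ∑ u ∈ Finset.range r,
          ((A ^ u) a d * (A ^ (r-1-u+s)) c b - (A ^ (r-1-u+s)) a d * (A ^ u) c b)))
    (r t : ℕ) (a b c d : Fin m) :
    ((A ^ (r+1)) a b * (A ^ t) c d - (A ^ t) c d * (A ^ (r+1)) a b)
    - ((A ^ r) a b * (A ^ (t+1)) c d - (A ^ (t+1)) c d * (A ^ r) a b)
    = -(θ * ((A ^ r) a d * (A ^ t) c b - (A ^ t) a d * (A ^ r) c b)) := by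
  rw [hPP (r+1) t a b c d, hPP r (t+1) a b c d, Finset.sum_range_succ]
  have e0 : r+1-1-r+t = t := by omega
  rw [e0]
  have ee : ∀ u ∈ Finset.range r,
      ((A ^ u) a d * (A ^ (r+1-1-u+t)) c b - (A ^ (r+1-1-u+t)) a d * (A ^ u) c b)
      = ((A ^ u) a d * (A ^ (r-1-u+(t+1))) c b - (A ^ (r-1-u+(t+1))) a d * (A ^ u) c b) := by
    intro u hu
    have hu' : u < r := Finset.mem_range.mp hu
    have : r+1-1-u+t = r-1-u+(t+1) := by omega
    rw [this]
  rw [Finset.sum_congr rfl ee, mul_add, neg_add, sub_neg_eq_add]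
  abel

lemma powA_comm (A : Matrix (Fin m) (Fin m) B) (x : B)
    (hx : ∀ a b, A a b * x = x * A a b) (t : ℕ) (a b : Fin m) :
    (A ^ t) a b * x = x * (A ^ t) a b := by
  induction t generalizing a b with
  | zero => rw [pow_zero_apply]; split_ifs <;> simp
  | succ t ih =>
    rw [pow_succ_apply, Finset.sum_mul, Finset.mul_sum]
    refine Finset.sum_congr rfl fun y _ => ?_
    rw [mul_assoc, hx, ← mul_assoc, ih, mul_assoc]

lemma A_comm_of_e_comm (θ : B) (hc : ∀ x : B, θ * x = x * θ)
    (e : Fin m → Fin m → B) (A : Matrix (Fin m) (Fin m) B)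
    (hA : ∀ a b, A a b = -(θ * e b a)) (x : B)
    (hex : ∀ a b, e a b * x = x * e a b) (a b : Fin m) :
    A a b * x = x * A a b := by
  rw [hA, neg_mul, mul_neg]
  congr 1
  rw [mul_assoc, hex, ← mul_assoc, hc x, mul_assoc]

lemma qp_expand (θ : B) (hc : ∀ x : B, θ * x = x * θ) (q p : Fin m → Fin n → B)
    (hpq : ∀ a b i j, p a i * q b j - θ * (q b j * p a i) =
      if a = b ∧ i = j then (1 : B) else 0)
    (a b c d : Fin m) (i j k l : Fin n) :
    q a i * p b j * (q c k * p d l)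
      = θ * (q a i * (q c k * (p b j * p d l)))
        + (if b = c ∧ j = k then q a i * p d l else 0) := by
  have h : p b j * q c k = θ * (q c k * p b j) + (if b = c ∧ j = k then (1:B) else 0) :=
    sub_eq_iff_eq_add'.mp (hpq b c j k)
  rw [mul_assoc, ← mul_assoc (p b j), h, add_mul, ite_mul, one_mul, zero_mul, mul_add,
    mul_ite, mul_zero]
  congr 1
  rw [mul_assoc θ, mul_assoc, mul_theta_assoc θ hc]

lemma g_symm (θ : B) (h2 : θ * θ = 1) (hc : ∀ x : B, θ * x = x * θ)
    (q p : Fin m → Fin n → B)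
    (hqq : ∀ a b i j, q a i * q b j = θ * (q b j * q a i))
    (hpp : ∀ a b i j, p a i * p b j = θ * (p b j * p a i))
    (a b c d : Fin m) (i j k l : Fin n) :
    θ * (q c k * (q a i * (p d l * p b j)))
      = θ * (q a i * (q c k * (p b j * p d l))) := by
  rw [hpp b d j l]
  rw [mul_theta_assoc θ hc (q c k), mul_theta_assoc θ hc (q a i), theta_theta θ h2]
  rw [← mul_assoc (q c k), ← mul_assoc (q a i), hqq c a k i]
  rw [mul_assoc θ (q a i * q c k)]
  exact theta_theta θ h2 _

lemma sum4_pairswap (F : Fin m → Fin m → Fin m → Fin m → B) :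
    (∑ a, ∑ b, ∑ c, ∑ d, F a b c d) = ∑ a, ∑ b, ∑ c, ∑ d, F c d a b := by
  have h : ∀ (G : Fin m → Fin m → Fin m → Fin m → B),
      (∑ p : (Fin m × Fin m) × Fin m × Fin m, G p.1.1 p.1.2 p.2.1 p.2.2)
        = ∑ a, ∑ b, ∑ c, ∑ d, G a b c d := by
    intro G; simp only [Fintype.sum_prod_type]
  rw [← h, ← h]
  exact Fintype.sum_equiv (Equiv.prodComm _ _) _ _ (fun x => rfl)

lemma sum4_swap13 (F : Fin m → Fin m → Fin m → Fin m → B) :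
    (∑ a, ∑ b, ∑ c, ∑ d, F a b c d) = ∑ a, ∑ b, ∑ c, ∑ d, F c b a d := by
  have h : ∀ (G : Fin m → Fin m → Fin m → Fin m → B),
      (∑ p : (Fin m × Fin m) × Fin m × Fin m, G p.1.1 p.1.2 p.2.1 p.2.2)
        = ∑ a, ∑ b, ∑ c, ∑ d, G a b c d := by
    intro G; simp only [Fintype.sum_prod_type]
  rw [← h, ← h]
  refine Fintype.sum_equiv ⟨fun x => ((x.2.1, x.1.2), (x.1.1, x.2.2)),
    fun x => ((x.2.1, x.1.2), (x.1.1, x.2.2)), fun ⟨⟨a,b⟩,⟨c,d⟩⟩ => rfl,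
    fun ⟨⟨a,b⟩,⟨c,d⟩⟩ => rfl⟩ _ _ (fun ⟨⟨a,b⟩,⟨c,d⟩⟩ => rfl)

lemma T_mul (X Y Q R : Fin m → Fin m → B)
    (hcomm : ∀ x y a b, Y x y * Q a b = Q a b * Y x y) :
    (∑ a, ∑ b, X a b * Q a b) * (∑ c, ∑ d, Y c d * R c d)
      = ∑ a, ∑ b, ∑ c, ∑ d, (X a b * Y c d) * (Q a b * R c d) := by
  simp only [Finset.sum_mul, Finset.mul_sum]
  rw [sum4_pairswap (fun a b c d => X c d * Q c d * (Y a b * R a b))]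
  refine Finset.sum_congr rfl fun a _ => Finset.sum_congr rfl fun b _ =>
    Finset.sum_congr rfl fun c _ => Finset.sum_congr rfl fun d _ => ?_
  rw [mul_assoc (X a b), ← mul_assoc (Q a b) (Y c d) (R c d), ← hcomm c d a b,
    mul_assoc (Y c d), ← mul_assoc, ← mul_assoc]

lemma contract1 (X Y Z : Fin m → Fin m → B) (P : Prop) [Decidable P] :
    (∑ a, ∑ b, ∑ c, ∑ d, (X a b * Y c d) * (if b = c ∧ P then Z a d else 0))
      = if P then ∑ a, ∑ d, (∑ x, X a x * Y x d) * Z a d else 0 := by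
  by_cases hP : P
  · simp only [hP, and_true, if_true]
    refine Finset.sum_congr rfl fun a _ => ?_
    calc (∑ b, ∑ c, ∑ d, (X a b * Y c d) * (if b = c then Z a d else 0))
        = ∑ b, ∑ d, (X a b * Y b d) * Z a d := by
          refine Finset.sum_congr rfl fun b _ => ?_
          rw [Finset.sum_comm]
          refine Finset.sum_congr rfl fun d _ => ?_
          simp [mul_ite, mul_zero, Finset.sum_ite_eq]
      _ = ∑ d, ∑ b, (X a b * Y b d) * Z a d := Finset.sum_comm
      _ = ∑ d, (∑ x, X a x * Y x d) * Z a d := by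
          refine Finset.sum_congr rfl fun d _ => ?_
          rw [Finset.sum_mul]
  · simp [hP]

lemma master (θ : B) (h2 : θ * θ = 1) (hc : ∀ x : B, θ * x = x * θ)
    (A : Matrix (Fin m) (Fin m) B) (q p : Fin m → Fin n → B)
    (hqq : ∀ a b i j, q a i * q b j = θ * (q b j * q a i))
    (hpp : ∀ a b i j, p a i * p b j = θ * (p b j * p a i))
    (hpq : ∀ a b i j, p a i * q b j - θ * (q b j * p a i) =
      if a = b ∧ i = j then (1 : B) else 0)
    (hAqp : ∀ (t : ℕ) (x y a b : Fin m) (i' j' : Fin n),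
      (A ^ t) x y * (q a i' * p b j') = (q a i' * p b j') * (A ^ t) x y)
    (R S : ℕ) (i j k l : Fin n) :
    (∑ a, ∑ b, (A ^ R) a b * (q a i * p b j)) * (∑ c, ∑ d, (A ^ S) c d * (q c k * p d l))
    - (∑ c, ∑ d, (A ^ S) c d * (q c k * p d l)) * (∑ a, ∑ b, (A ^ R) a b * (q a i * p b j))
    = (∑ a, ∑ b, ∑ c, ∑ d, ((A ^ R) a b * (A ^ S) c d - (A ^ S) c d * (A ^ R) a b)
          * (θ * (q a i * (q c k * (p b j * p d l)))))
      + ((if j = k then ∑ a, ∑ d, (A ^ (R+S)) a d * (q a i * p d l) else 0)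
         - (if l = i then ∑ c, ∑ b, (A ^ (S+R)) c b * (q c k * p b j) else 0)) := by
  rw [T_mul (fun a b => (A ^ R) a b) (fun c d => (A ^ S) c d)
      (fun a b => q a i * p b j) (fun c d => q c k * p d l)
      (fun x y a b => hAqp S x y a b i j)]
  rw [T_mul (fun a b => (A ^ S) a b) (fun c d => (A ^ R) c d)
      (fun a b => q a k * p b l) (fun c d => q c i * p d j)
      (fun x y a b => hAqp R x y a b k l)]
  rw [sum4_pairswap (fun a b c d => ((A ^ S) a b * (A ^ R) c d) * ((q a k * p b l) * (q c i * p d j)))]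
  simp only [← Finset.sum_sub_distrib]
  have key : ∀ (a b c d : Fin m),
      ((A ^ R) a b * (A ^ S) c d) * (q a i * p b j * (q c k * p d l))
      - ((A ^ S) c d * (A ^ R) a b) * (q c k * p d l * (q a i * p b j))
      = ((A ^ R) a b * (A ^ S) c d - (A ^ S) c d * (A ^ R) a b)
          * (θ * (q a i * (q c k * (p b j * p d l))))
        + (((A ^ R) a b * (A ^ S) c d) * (if b = c ∧ j = k then q a i * p d l else 0)
           - ((A ^ S) c d * (A ^ R) a b) * (if d = a ∧ l = i then q c k * p b j else 0)) := by
    intro a b c d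
    rw [qp_expand θ hc q p hpq a b c d i j k l, qp_expand θ hc q p hpq c d a b k l i j,
      g_symm θ h2 hc q p hqq hpp a b c d i j k l]
    noncomm_ring
  calc (∑ a, ∑ b, ∑ c, ∑ d,
          (((A ^ R) a b * (A ^ S) c d) * (q a i * p b j * (q c k * p d l))
           - ((A ^ S) c d * (A ^ R) a b) * (q c k * p d l * (q a i * p b j))))
      = (∑ a, ∑ b, ∑ c, ∑ d,
          (((A ^ R) a b * (A ^ S) c d - (A ^ S) c d * (A ^ R) a b)
            * (θ * (q a i * (q c k * (p b j * p d l))))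
           + (((A ^ R) a b * (A ^ S) c d) * (if b = c ∧ j = k then q a i * p d l else 0)
              - ((A ^ S) c d * (A ^ R) a b) * (if d = a ∧ l = i then q c k * p b j else 0)))) := by
        exact Finset.sum_congr rfl fun a _ => Finset.sum_congr rfl fun b _ =>
          Finset.sum_congr rfl fun c _ => Finset.sum_congr rfl fun d _ => key a b c d
    _ = _ := by
        simp only [Finset.sum_add_distrib, Finset.sum_sub_distrib]
        congr 1
        rw [contract1 (fun a b => (A ^ R) a b) (fun c d => (A ^ S) c d)
            (fun a d => q a i * p d l) (j = k)]
        rw [sum4_pairswap (fun a b c d => ((A ^ S) c d * (A ^ R) a b)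
            * (if d = a ∧ l = i then q c k * p b j else 0))]
        rw [contract1 (fun a b => (A ^ S) a b) (fun c d => (A ^ R) c d)
            (fun a d => q a k * p d j) (l = i)]
        simp only [← pow_add_apply]

lemma qq_swap (θ : B) (h2 : θ * θ = 1) (hc : ∀ x : B, θ * x = x * θ)
    (q : Fin m → Fin n → B)
    (hqq : ∀ a b i j, q a i * q b j = θ * (q b j * q a i))
    (x y : Fin m) (u v : Fin n) (W : B) :
    θ * (q x u * (q y v * W)) = q y v * (q x u * W) := by
  rw [← mul_assoc (q x u), hqq x y u v, mul_assoc θ, ← mul_assoc θ θ, h2, one_mul, mul_assoc]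

lemma swap_ite {α : Type*} [DecidableEq α] (u v : α) (X : B) :
    (if u = v then X else 0) = (if v = u then X else 0) := by
  by_cases h : u = v
  · simp [h]
  · simp [h, Ne.symm h]

end YangianAux

/-- Coefficient form of Proposition 1.3(i): the elements
`T^{(r)}_{ij} = ∑_{a,b} (A^{r-1})_{ab} q_{ai} p_{bj}` (with `A_{ab} = -θ e_{ba}`,
`T^{(0)}_{ij} = δ_{ij}`) satisfy the defining relations of the Yangian `Y(gl_n)`. -/
theorem yangian_hom_coeff {B : Type*} [Ring B] (m n : ℕ) (θ : B) (hθ : θ = 1 ∨ θ = -1)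
    (e : Fin m → Fin m → B)
    (he : ∀ a b c d, e a b * e c d - e c d * e a b =
      (if b = c then e a d else 0) - (if d = a then e c b else 0))
    (q p : Fin m → Fin n → B)
    (hqq : ∀ a b i j, q a i * q b j = θ * (q b j * q a i))
    (hpp : ∀ a b i j, p a i * p b j = θ * (p b j * p a i))
    (hpq : ∀ a b i j, p a i * q b j - θ * (q b j * p a i) =
      if a = b ∧ i = j then (1 : B) else 0)
    (heq : ∀ a b c i, e a b * q c i = q c i * e a b)
    (hep : ∀ a b c i, e a b * p c i = p c i * e a b)
    (A : Matrix (Fin m) (Fin m) B) (hA : ∀ a b, A a b = -(θ * e b a))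
    (T : ℕ → Fin n → Fin n → B)
    (hT0 : ∀ i j, T 0 i j = if i = j then (1 : B) else 0)
    (hT : ∀ r i j, T (r + 1) i j = ∑ a, ∑ b, (A ^ r) a b * (q a i * p b j)) :
    ∀ (r t : ℕ) (i j k l : Fin n),
      (T (r + 1) i j * T t k l - T t k l * T (r + 1) i j) -
      (T r i j * T (t + 1) k l - T (t + 1) k l * T r i j) =
        T r k j * T t i l - T t k j * T r i l := by
  have h2 : θ * θ = 1 := by rcases hθ with h | h <;> simp [h]
  have hc : ∀ x : B, θ * x = x * θ := by
    intro x; rcases hθ with h | h <;> simp [h]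
  have hAq : ∀ (t : ℕ) (a b c : Fin m) (i' : Fin n),
      (A ^ t) a b * q c i' = q c i' * (A ^ t) a b := fun t a b c i' =>
    powA_comm A (q c i')
      (fun a b => A_comm_of_e_comm θ hc e A hA _ (fun x y => heq x y c i') a b) t a b
  have hAp : ∀ (t : ℕ) (a b c : Fin m) (j' : Fin n),
      (A ^ t) a b * p c j' = p c j' * (A ^ t) a b := fun t a b c j' =>
    powA_comm A (p c j')
      (fun a b => A_comm_of_e_comm θ hc e A hA _ (fun x y => hep x y c j') a b) t a b
  have hAqp : ∀ (t : ℕ) (x y a b : Fin m) (i' j' : Fin n),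
      (A ^ t) x y * (q a i' * p b j') = (q a i' * p b j') * (A ^ t) x y := by
    intro t x y a b i' j'
    rw [← mul_assoc, hAq, mul_assoc, hAp, ← mul_assoc]
  have hPP : ∀ (r s : ℕ) (a b c d : Fin m),
      (A ^ r) a b * (A ^ s) c d - (A ^ s) c d * (A ^ r) a b
      = -(θ * ∑ u ∈ Finset.range r,
          ((A ^ u) a d * (A ^ (r-1-u+s)) c b - (A ^ (r-1-u+s)) a d * (A ^ u) c b)) :=
    comPowPow θ h2 hc A (fun s a b c d => comApow θ h2 hc e he A hA s a b c d)
  intro r t i j k l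
  match r, t with
  | 0, 0 =>
    simp only [hT0]
    split_ifs <;> simp
  | 0, (t' + 1) =>
    rw [hT0 i j, hT0 k j, hT0 i l, hT 0 i j, hT t' k l,
      master θ h2 hc A q p hqq hpp hpq hAqp 0 t' i j k l]
    have hzero : (∑ a, ∑ b, ∑ c, ∑ d,
        (((A ^ 0) a b * (A ^ t') c d - (A ^ t') c d * (A ^ 0) a b))
          * (θ * (q a i * (q c k * (p b j * p d l))))) = 0 := by
      refine Finset.sum_eq_zero fun a _ => Finset.sum_eq_zero fun b _ =>
        Finset.sum_eq_zero fun c _ => Finset.sum_eq_zero fun d _ => ?_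
      have h0 : (A ^ 0) a b * (A ^ t') c d - (A ^ t') c d * (A ^ 0) a b = 0 := by
        simp only [pow_zero, Matrix.one_apply]
        split_ifs <;> simp
      rw [h0, zero_mul]
    rw [hzero, zero_add]
    have hcen : (if i = j then (1:B) else 0) * T (t' + 1 + 1) k l
        - T (t' + 1 + 1) k l * (if i = j then (1:B) else 0) = 0 := by
      split_ifs <;> simp
    rw [hcen, sub_zero]
    rw [show (0 + t' : ℕ) = t' from by omega, show (t' + 0 : ℕ) = t' from rfl]
    rw [← hT t' i l, ← hT t' k j]
    rw [ite_mul, one_mul, zero_mul, mul_ite, mul_one, mul_zero,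
      swap_ite k j, swap_ite i l]
  | (r' + 1), 0 =>
    rw [hT0 k l, hT0 k j, hT0 i l, hT r' i j, hT 0 k l,
      master θ h2 hc A q p hqq hpp hpq hAqp r' 0 i j k l]
    have hzero : (∑ a, ∑ b, ∑ c, ∑ d,
        (((A ^ r') a b * (A ^ 0) c d - (A ^ 0) c d * (A ^ r') a b))
          * (θ * (q a i * (q c k * (p b j * p d l))))) = 0 := by
      refine Finset.sum_eq_zero fun a _ => Finset.sum_eq_zero fun b _ =>
        Finset.sum_eq_zero fun c _ => Finset.sum_eq_zero fun d _ => ?_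
      have h0 : (A ^ r') a b * (A ^ 0) c d - (A ^ 0) c d * (A ^ r') a b = 0 := by
        simp only [pow_zero, Matrix.one_apply]
        split_ifs <;> simp
      rw [h0, zero_mul]
    rw [hzero, zero_add]
    have hcen : T (r' + 1 + 1) i j * (if k = l then (1:B) else 0)
        - (if k = l then (1:B) else 0) * T (r' + 1 + 1) i j = 0 := by
      split_ifs <;> simp
    rw [hcen, zero_sub]
    rw [show (r' + 0 : ℕ) = r' from rfl, show (0 + r' : ℕ) = r' from by omega]
    rw [← hT r' i l, ← hT r' k j]
    rw [neg_sub, ite_mul, one_mul, zero_mul, mul_ite, mul_one, mul_zero,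
      swap_ite k j, swap_ite i l]
  | (r' + 1), (t' + 1) =>
    rw [hT (r' + 1) i j, hT r' i j, hT t' k l, hT (t' + 1) k l,
      hT r' k j, hT t' i l, hT t' k j, hT r' i l,
      master θ h2 hc A q p hqq hpp hpq hAqp (r' + 1) t' i j k l,
      master θ h2 hc A q p hqq hpp hpq hAqp r' (t' + 1) i j k l]
    rw [show (r' + 1 + t' : ℕ) = r' + (t' + 1) from by omega,
      show (t' + (r' + 1) : ℕ) = t' + 1 + r' from by omega]
    rw [add_sub_add_right_eq_sub]
    -- LHS is now the difference of the two G-sums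
    simp only [← Finset.sum_sub_distrib]
    -- per-term: coefficient difference via telescope
    have lkey : ∀ (a b c d : Fin m),
        ((A ^ (r' + 1)) a b * (A ^ t') c d - (A ^ t') c d * (A ^ (r' + 1)) a b)
            * (θ * (q a i * (q c k * (p b j * p d l))))
        - ((A ^ r') a b * (A ^ (t' + 1)) c d - (A ^ (t' + 1)) c d * (A ^ r') a b)
            * (θ * (q a i * (q c k * (p b j * p d l))))
        = (-(θ * ((A ^ r') a d * (A ^ t') c b - (A ^ t') a d * (A ^ r') c b)))
            * (θ * (q a i * (q c k * (p b j * p d l)))) := by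
      intro a b c d
      rw [← sub_mul, comPow_tel θ A hPP r' t' a b c d]
    rw [Finset.sum_congr rfl fun a _ => Finset.sum_congr rfl fun b _ =>
      Finset.sum_congr rfl fun c _ => Finset.sum_congr rfl fun d _ => lkey a b c d]
    -- now transform the RHS
    rw [T_mul (fun a b => (A ^ r') a b) (fun c d => (A ^ t') c d)
        (fun a b => q a k * p b j) (fun c d => q c i * p d l)
        (fun x y a b => hAqp t' x y a b k j)]
    rw [T_mul (fun a b => (A ^ t') a b) (fun c d => (A ^ r') c d)
        (fun a b => q a k * p b j) (fun c d => q c i * p d l)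
        (fun x y a b => hAqp r' x y a b k j)]
    simp only [← Finset.sum_sub_distrib]
    have rkey : ∀ (a b c d : Fin m),
        ((A ^ r') a b * (A ^ t') c d) * (q a k * p b j * (q c i * p d l))
        - ((A ^ t') a b * (A ^ r') c d) * (q a k * p b j * (q c i * p d l))
        = ((A ^ r') a b * (A ^ t') c d - (A ^ t') a b * (A ^ r') c d)
            * (q c i * (q a k * (p b j * p d l)))
          + (((A ^ r') a b * (A ^ t') c d) * (if b = c ∧ j = i then q a k * p d l else 0)
             - ((A ^ t') a b * (A ^ r') c d) * (if b = c ∧ j = i then q a k * p d l else 0)) := by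
      intro a b c d
      rw [qp_expand θ hc q p hpq a b c d k j i l,
        qq_swap θ h2 hc q hqq a c k i (p b j * p d l)]
      noncomm_ring
    rw [Finset.sum_congr rfl fun a _ => Finset.sum_congr rfl fun b _ =>
      Finset.sum_congr rfl fun c _ => Finset.sum_congr rfl fun d _ => rkey a b c d]
    simp only [Finset.sum_add_distrib]
    rw [show (∑ a, ∑ b, ∑ c, ∑ d,
        (((A ^ r') a b * (A ^ t') c d) * (if b = c ∧ j = i then q a k * p d l else 0)
         - ((A ^ t') a b * (A ^ r') c d) * (if b = c ∧ j = i then q a k * p d l else 0)))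
        = 0 from ?_]
    · rw [add_zero]
      rw [sum4_swap13 (fun a b c d => ((A ^ r') a b * (A ^ t') c d - (A ^ t') a b * (A ^ r') c d)
            * (q c i * (q a k * (p b j * p d l))))]
      refine Finset.sum_congr rfl fun a _ => Finset.sum_congr rfl fun b _ =>
        Finset.sum_congr rfl fun c _ => Finset.sum_congr rfl fun d _ => ?_
      have hsym := comPow_sym θ A hPP (t' + r') t' r' rfl a d c b
      rw [neg_mul, theta_mul_theta_mul θ h2 hc, ← neg_mul]
      congr 1
      rw [← sub_eq_zero]
      calc -((A ^ r') a d * (A ^ t') c b - (A ^ t') a d * (A ^ r') c b)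
            - ((A ^ r') c b * (A ^ t') a d - (A ^ t') c b * (A ^ r') a d)
          = ((A ^ t') a d * (A ^ r') c b - (A ^ r') c b * (A ^ t') a d)
            + ((A ^ t') c b * (A ^ r') a d - (A ^ r') a d * (A ^ t') c b) := by abel
        _ = 0 := hsym
    · simp only [Finset.sum_sub_distrib]
      rw [contract1 (fun a b => (A ^ r') a b) (fun c d => (A ^ t') c d)
          (fun a d => q a k * p d l) (j = i)]
      rw [contract1 (fun a b => (A ^ t') a b) (fun c d => (A ^ r') c d)
          (fun a d => q a k * p d l) (j = i)]
      simp only [← pow_add_apply]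
      rw [show (t' + r' : ℕ) = r' + t' from by omega, sub_self]
end

section
/- Let θ ∈ {1, −1} and let B be an associative unital ℂ-algebra containing: (a) elements e_{ab} (1 ≤ a,b ≤ m) satisfying the gl_m relations [e_{ab}, e_{cd}] = δ_{bc}e_{ad} − δ_{da}e_{cb}; (b) elements q_{ai}, p_{ai} (1 ≤ a ≤ m, 1 ≤ i ≤ n) satisfying q_{ai}q_{bj} = θ q_{bj}q_{ai}, p_{ai}p_{bj} = θ p_{bj}p_{ai}, p_{ai}q_{bj} − θ q_{bj}p_{ai} = δ_{ab}δ_{ij}·1; and such that every e_{ab} commutes with every q_{ci} and every p_{ci}. Let A be the m×m matrix over B with entries A_{ab} = −θ e_{ba}, and for r ≥ 1 define T^{(r)}_{ij} = ∑_{a,b=1}^{m} (A^{r−1})_{ab} · q_{ai} p_{bj}. For 1 ≤ c,d ≤ m define F_{cd} = e_{cd} + θ δ_{cd}(n/2)·1 + ∑_{k=1}^{n} q_{ck}p_{dk}. Then [F_{cd}, T^{(r)}_{ij}] = 0 for all c,d ∈ {1,…,m}, i,j ∈ {1,…,n}, and r ≥ 1. -/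
/-- Coefficient form of Proposition 1.3(ii): the elements
`F_{cd} = e_{cd} + θ δ_{cd}(n/2)·1 + ∑_k q_{ck}p_{dk}` commute with the Yangian
image elements `T^{(r)}_{ij} = ∑_{a,b} (A^{r-1})_{ab} q_{ai} p_{bj}`, `r ≥ 1`. -/
theorem yangian_image_commutes_glm {B : Type*} [Ring B] [Algebra ℂ B] (m n : ℕ)
    (θ : B) (hθ : θ = 1 ∨ θ = -1)
    (e : Fin m → Fin m → B)
    (he : ∀ a b c d, e a b * e c d - e c d * e a b =
      (if b = c then e a d else 0) - (if d = a then e c b else 0))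
    (q p : Fin m → Fin n → B)
    (hqq : ∀ a b i j, q a i * q b j = θ * (q b j * q a i))
    (hpp : ∀ a b i j, p a i * p b j = θ * (p b j * p a i))
    (hpq : ∀ a b i j, p a i * q b j - θ * (q b j * p a i) =
      if a = b ∧ i = j then (1 : B) else 0)
    (heq : ∀ a b c i, e a b * q c i = q c i * e a b)
    (hep : ∀ a b c i, e a b * p c i = p c i * e a b)
    (A : Matrix (Fin m) (Fin m) B) (hA : ∀ a b, A a b = -(θ * e b a))
    (T : ℕ → Fin n → Fin n → B)
    (hT : ∀ r i j, T (r + 1) i j = ∑ a, ∑ b, (A ^ r) a b * (q a i * p b j))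
    (F : Fin m → Fin m → B)
    (hF : ∀ c d, F c d =
      e c d + θ * ((if c = d then (n : ℂ) / 2 else 0) • (1 : B)) + ∑ k, q c k * p d k) :
    ∀ (c d : Fin m) (i j : Fin n) (r : ℕ),
      F c d * T (r + 1) i j - T (r + 1) i j * F c d = 0 := by
  have hθc : ∀ x : B, θ * x = x * θ := by
    rcases hθ with h | h <;> subst h <;> intro x <;> simp
  have hθ2 : θ * θ = 1 := by rcases hθ with h | h <;> subst h <;> norm_num
  have hcent : ∀ x y : B, x * (θ * y) = θ * (x * y) := fun x y => by
    rw [← mul_assoc, ← hθc, mul_assoc]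
  -- p q relation in solved form
  have hpq' : ∀ a b i j, p a i * q b j =
      θ * (q b j * p a i) + (if a = b ∧ i = j then (1 : B) else 0) := by
    intro a b i j
    have h := sub_eq_iff_eq_add.mp (hpq a b i j)
    rw [h, add_comm]
  intro c d i j r
  -- entries of A commute with q and p
  have hA1 : ∀ (x y : Fin m) (u : Fin m) (k : Fin n),
      Commute (A x y) (q u k) ∧ Commute (A x y) (p u k) := by
    intro x y u k
    constructor
    · rw [hA]
      exact (((show Commute θ (q u k) from hθc _).mul_left
        (show Commute (e y x) (q u k) from heq y x u k))).neg_left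
    · rw [hA]
      exact (((show Commute θ (p u k) from hθc _).mul_left
        (show Commute (e y x) (p u k) from hep y x u k))).neg_left
  have hArq : ∀ (s : ℕ) (x y : Fin m) (u : Fin m) (k : Fin n),
      Commute ((A ^ s) x y) (q u k) := by
    intro s
    induction s with
    | zero =>
      intro x y u k
      simp only [pow_zero, Matrix.one_apply]
      split
      · exact Commute.one_left _
      · exact Commute.zero_left _
    | succ s ih =>
      intro x y u k
      rw [pow_succ, Matrix.mul_apply]
      exact Commute.sum_left _ _ _ fun z _ => (ih x z u k).mul_left (hA1 z y u k).1
  have hArp : ∀ (s : ℕ) (x y : Fin m) (u : Fin m) (k : Fin n),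
      Commute ((A ^ s) x y) (p u k) := by
    intro s
    induction s with
    | zero =>
      intro x y u k
      simp only [pow_zero, Matrix.one_apply]
      split
      · exact Commute.one_left _
      · exact Commute.zero_left _
    | succ s ih =>
      intro x y u k
      rw [pow_succ, Matrix.mul_apply]
      exact Commute.sum_left _ _ _ fun z _ => (ih x z u k).mul_left (hA1 z y u k).2
  -- entries of products with the special matrix  M = e c d • 1 + E_{cd}
  have hMent1 : ∀ (N : Matrix (Fin m) (Fin m) B) (x y : Fin m),
      ((((e c d) • (1 : Matrix (Fin m) (Fin m) B) + Matrix.single c d 1) * N :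
        Matrix (Fin m) (Fin m) B) x y)
      = e c d * N x y + (if c = x then N d y else 0) := by
    intro N x y
    rw [Matrix.mul_apply]
    simp only [Matrix.add_apply, Matrix.smul_apply, Matrix.one_apply, smul_eq_mul,
      Matrix.single, Matrix.of_apply, ite_and, mul_ite, mul_one, mul_zero,
      add_mul, ite_mul, one_mul, zero_mul, zero_add, Finset.sum_add_distrib]
    congr 1
    · rw [Finset.sum_ite_eq Finset.univ x (fun z => e c d * N z y)]
      simp
    · by_cases hcx : c = x
      · simp [hcx, Finset.sum_ite_eq]
      · simp [hcx]
  have hMent2 : ∀ (N : Matrix (Fin m) (Fin m) B) (x y : Fin m),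
      ((N * ((e c d) • (1 : Matrix (Fin m) (Fin m) B) + Matrix.single c d 1) :
        Matrix (Fin m) (Fin m) B) x y)
      = N x y * e c d + (if d = y then N x c else 0) := by
    intro N x y
    rw [Matrix.mul_apply]
    simp only [Matrix.add_apply, Matrix.smul_apply, Matrix.one_apply, smul_eq_mul,
      Matrix.single, Matrix.of_apply, ite_and, mul_ite, mul_one, mul_zero,
      mul_add, ite_mul, one_mul, zero_mul, add_zero, Finset.sum_add_distrib]
    congr 1
    · rw [Finset.sum_ite_eq' Finset.univ y (fun z => N x z * e c d)]
      simp
    · by_cases hdy : d = y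
      · simp [hdy, Finset.sum_ite_eq']
      · simp [hdy]
  -- the matrix `e c d • 1 + E_{cd}` commutes with A
  have hM : Commute ((e c d) • (1 : Matrix (Fin m) (Fin m) B)
      + Matrix.single c d 1) A := by
    show _ * _ = _ * _
    ext x y
    rw [hMent1 A x y, hMent2 A x y]
    rw [hA x y, hA d y, hA x c]
    have h' := sub_eq_iff_eq_add.mp (he c d y x)
    by_cases h1 : c = x <;> by_cases h2 : d = y
    · simp only [if_pos h2, if_pos h1.symm] at h'
      simp only [if_pos h1, if_pos h2]
      simp only [mul_neg, neg_mul, hcent, mul_assoc]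
      rw [h']; noncomm_ring
    · simp only [if_neg h2, if_pos h1.symm] at h'
      simp only [if_pos h1, if_neg h2]
      simp only [mul_neg, neg_mul, hcent, mul_assoc]
      rw [h']; noncomm_ring
    · simp only [if_pos h2, if_neg (fun hh : x = c => h1 hh.symm)] at h'
      simp only [if_neg h1, if_pos h2]
      simp only [mul_neg, neg_mul, hcent, mul_assoc]
      rw [h']; noncomm_ring
    · simp only [if_neg h2, if_neg (fun hh : x = c => h1 hh.symm)] at h'
      simp only [if_neg h1, if_neg h2]
      simp only [mul_neg, neg_mul, hcent, mul_assoc]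
      rw [h']; noncomm_ring
  have hMr := hM.pow_right r
  -- entrywise commutator of e c d with A^r
  have hEnt : ∀ x y, e c d * (A ^ r) x y - (A ^ r) x y * e c d
      = (if d = y then (A ^ r) x c else 0) - (if c = x then (A ^ r) d y else 0) := by
    intro x y
    have h : ((((e c d) • (1 : Matrix (Fin m) (Fin m) B)
        + Matrix.single c d 1) * A ^ r : Matrix (Fin m) (Fin m) B) x y)
        = ((A ^ r * ((e c d) • (1 : Matrix (Fin m) (Fin m) B)
        + Matrix.single c d 1) : Matrix (Fin m) (Fin m) B) x y) := by rw [hMr]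
    rw [hMent1, hMent2] at h
    rw [sub_eq_sub_iff_add_eq_add, h, add_comm]
  -- the key quartic commutator
  have hK : ∀ (k : Fin n) (a b : Fin m),
      (q c k * p d k) * (q a i * p b j) - (q a i * p b j) * (q c k * p d k) =
      (if d = a ∧ k = i then q c k * p b j else 0)
        - (if b = c ∧ j = k then q a i * p d k else 0) := by
    intro k a b
    have e1 : (q c k * p d k) * (q a i * p b j)
        = θ * (q c k * (q a i * (p d k * p b j)))
          + (if d = a ∧ k = i then q c k * p b j else 0) := by
      calc (q c k * p d k) * (q a i * p b j)
          = q c k * ((p d k * q a i) * p b j) := by noncomm_ring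
        _ = q c k * ((θ * (q a i * p d k)
              + (if d = a ∧ k = i then (1:B) else 0)) * p b j) := by rw [hpq']
        _ = θ * (q c k * (q a i * (p d k * p b j)))
              + (if d = a ∧ k = i then q c k * p b j else 0) := by
            simp only [add_mul, mul_add, ite_mul, mul_ite, one_mul, mul_one,
              zero_mul, mul_zero, mul_assoc, hcent]
    have e2 : (q a i * p b j) * (q c k * p d k)
        = θ * (q a i * (q c k * (p b j * p d k)))
          + (if b = c ∧ j = k then q a i * p d k else 0) := by
      calc (q a i * p b j) * (q c k * p d k)
          = q a i * ((p b j * q c k) * p d k) := by noncomm_ring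
        _ = q a i * ((θ * (q c k * p b j)
              + (if b = c ∧ j = k then (1:B) else 0)) * p d k) := by rw [hpq']
        _ = θ * (q a i * (q c k * (p b j * p d k)))
              + (if b = c ∧ j = k then q a i * p d k else 0) := by
            simp only [add_mul, mul_add, ite_mul, mul_ite, one_mul, mul_one,
              zero_mul, mul_zero, mul_assoc, hcent]
    have e3 : θ * (q c k * (q a i * (p d k * p b j)))
        = θ * (q a i * (q c k * (p b j * p d k))) := by
      have h2 : p d k * p b j = θ * (p b j * p d k) := hpp d b k j
      have h1 : q c k * q a i = θ * (q a i * q c k) := hqq c a k i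
      rw [h2, ← mul_assoc (q c k), h1]
      simp only [hcent, mul_assoc]
      rw [← mul_assoc θ θ, hθ2, one_mul]
    rw [e1, e2, e3]
    abel
  -- abbreviations
  rw [hF, hT]
  set s1 : B := (if c = d then (n : ℂ) / 2 else 0) • (1 : B) with hs1
  set T' : B := ∑ a, ∑ b, (A ^ r) a b * (q a i * p b j) with hT'
  -- scalar part commutes
  have hscal : (θ * s1) * T' = T' * (θ * s1) := by
    rw [hs1, mul_smul_comm, mul_one, smul_mul_assoc, hθc, mul_smul_comm]
  -- e part
  have he_part : e c d * T' - T' * e c d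
      = (∑ x, (A ^ r) x c * (q x i * p d j)) - (∑ y, (A ^ r) d y * (q c i * p y j)) := by
    rw [hT', Finset.mul_sum, Finset.sum_mul, ← Finset.sum_sub_distrib]
    have hterm : ∀ x : Fin m,
        e c d * (∑ y, (A ^ r) x y * (q x i * p y j))
          - (∑ y, (A ^ r) x y * (q x i * p y j)) * e c d
        = (A ^ r) x c * (q x i * p d j)
          - (if c = x then ∑ y, (A ^ r) d y * (q x i * p y j) else 0) := by
      intro x
      rw [Finset.mul_sum, Finset.sum_mul, ← Finset.sum_sub_distrib]
      have hterm2 : ∀ y : Fin m,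
          e c d * ((A ^ r) x y * (q x i * p y j))
            - ((A ^ r) x y * (q x i * p y j)) * e c d
          = (if d = y then (A ^ r) x c * (q x i * p y j) else 0)
            - (if c = x then (A ^ r) d y * (q x i * p y j) else 0) := by
        intro y
        have hcom : e c d * (q x i * p y j) = (q x i * p y j) * e c d := by
          rw [← mul_assoc, heq, mul_assoc, hep, ← mul_assoc]
        have h2 : ((A ^ r) x y * (q x i * p y j)) * e c d
            = ((A ^ r) x y * e c d) * (q x i * p y j) := by
          rw [mul_assoc, ← hcom, ← mul_assoc]
        have key : e c d * ((A ^ r) x y * (q x i * p y j))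
            - ((A ^ r) x y * (q x i * p y j)) * e c d
            = (e c d * (A ^ r) x y - (A ^ r) x y * e c d) * (q x i * p y j) := by
          rw [h2, sub_mul]
          noncomm_ring
        rw [key, hEnt, sub_mul, ite_mul, ite_mul, zero_mul]
      rw [Finset.sum_congr rfl fun y _ => hterm2 y, Finset.sum_sub_distrib]
      congr 1
      · rw [Finset.sum_ite_eq Finset.univ d (fun y => (A ^ r) x c * (q x i * p y j))]
        simp
      · by_cases hx : c = x <;> simp [hx]
    rw [Finset.sum_congr rfl fun x _ => hterm x, Finset.sum_sub_distrib]
    congr 1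
    rw [Finset.sum_ite_eq Finset.univ c
      (fun x => ∑ y, (A ^ r) d y * (q x i * p y j))]
    simp
  -- qp part
  have hqp_part : (∑ k, q c k * p d k) * T' - T' * (∑ k, q c k * p d k)
      = (∑ y, (A ^ r) d y * (q c i * p y j)) - (∑ x, (A ^ r) x c * (q x i * p d j)) := by
    rw [hT', Finset.mul_sum, Finset.sum_mul, ← Finset.sum_sub_distrib]
    have hterm : ∀ x : Fin m,
        (∑ k, q c k * p d k) * (∑ y, (A ^ r) x y * (q x i * p y j))
          - (∑ y, (A ^ r) x y * (q x i * p y j)) * (∑ k, q c k * p d k)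
        = (if d = x then ∑ y, (A ^ r) x y * (q c i * p y j) else 0)
          - (A ^ r) x c * (q x i * p d j) := by
      intro x
      rw [Finset.mul_sum, Finset.sum_mul, ← Finset.sum_sub_distrib]
      have hterm2 : ∀ y : Fin m,
          (∑ k, q c k * p d k) * ((A ^ r) x y * (q x i * p y j))
            - ((A ^ r) x y * (q x i * p y j)) * (∑ k, q c k * p d k)
          = (if d = x then (A ^ r) x y * (q c i * p y j) else 0)
            - (if y = c then (A ^ r) x y * (q x i * p d j) else 0) := by
        intro y
        rw [Finset.sum_mul, Finset.mul_sum, ← Finset.sum_sub_distrib]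
        have hterm3 : ∀ k : Fin n,
            (q c k * p d k) * ((A ^ r) x y * (q x i * p y j))
              - ((A ^ r) x y * (q x i * p y j)) * (q c k * p d k)
            = (A ^ r) x y * ((if d = x ∧ k = i then q c k * p y j else 0)
                - (if y = c ∧ j = k then q x i * p d k else 0)) := by
          intro k
          have hcom2 : (q c k * p d k) * (A ^ r) x y
              = (A ^ r) x y * (q c k * p d k) :=
            (((hArq r x y c k).mul_right (hArp r x y d k))).eq.symm
          have t1 : (q c k * p d k) * ((A ^ r) x y * (q x i * p y j))
              = (A ^ r) x y * ((q c k * p d k) * (q x i * p y j)) := by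
            rw [← mul_assoc, hcom2, mul_assoc]
          have t2 : ((A ^ r) x y * (q x i * p y j)) * (q c k * p d k)
              = (A ^ r) x y * ((q x i * p y j) * (q c k * p d k)) :=
            mul_assoc _ _ _
          rw [t1, t2, ← mul_sub, hK k x y]
        rw [Finset.sum_congr rfl fun k _ => hterm3 k, ← Finset.mul_sum]
        have s1' : (∑ k : Fin n, ((if d = x ∧ k = i then q c k * p y j else 0)
            - (if y = c ∧ j = k then q x i * p d k else 0)))
            = (if d = x then q c i * p y j else 0)
              - (if y = c then q x i * p d j else 0) := by
          rw [Finset.sum_sub_distrib]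
          congr 1
          · by_cases hdx : d = x <;> simp [hdx, ite_and, Finset.sum_ite_eq']
          · by_cases hyc : y = c <;> simp [hyc, ite_and, Finset.sum_ite_eq]
        rw [s1', mul_sub, mul_ite, mul_ite, mul_zero]
      rw [Finset.sum_congr rfl fun y _ => hterm2 y, Finset.sum_sub_distrib]
      congr 1
      · by_cases hdx : d = x <;> simp [hdx]
      · rw [Finset.sum_ite_eq' Finset.univ c (fun y => (A ^ r) x y * (q x i * p d j))]
        simp
    rw [Finset.sum_congr rfl fun x _ => hterm x, Finset.sum_sub_distrib]
    congr 1
    rw [Finset.sum_ite_eq Finset.univ d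
      (fun x => ∑ y, (A ^ r) x y * (q c i * p y j))]
    simp
  -- assemble
  have expand : (e c d + θ * s1 + ∑ k, q c k * p d k) * T'
      - T' * (e c d + θ * s1 + ∑ k, q c k * p d k)
      = (e c d * T' - T' * e c d)
        + ((θ * s1) * T' - T' * (θ * s1))
        + ((∑ k, q c k * p d k) * T' - T' * (∑ k, q c k * p d k)) := by
    noncomm_ring
  rw [expand, he_part, hqp_part, hscal]
  abel
end

section
/- Let θ ∈ {1, −1} and let R be an associative unital ring containing elements e_{ab} (1 ≤ a,b ≤ m) satisfying the gl_m relations [e_{ab}, e_{cd}] = δ_{bc}e_{ad} − δ_{da}e_{cb}. Let A be the m×m matrix over R with entries A_{ab} = −θ e_{ba}. Then for all r, t ≥ 0 and all a,b,c,d ∈ {1,…,m}: [(A^{r+1})_{ab}, (A^{t})_{cd}] − [(A^{r})_{ab}, (A^{t+1})_{cd}] = θ·((A^{r})_{cb}(A^{t})_{ad} − (A^{t})_{cb}(A^{r})_{ad}), where [x,y] = xy − yx and A^{0} is the identity matrix. -/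
section
variable {R : Type*} [Ring R] {m : ℕ}

theorem L1 (θ : R) (hc : ∀ x : R, θ * x = x * θ)
    (A : Matrix (Fin m) (Fin m) R)
    (hbase : ∀ a b c d, A a b * A c d - A c d * A a b =
      θ * ((if c = b then A a d else 0) - (if a = d then A c b else 0))) :
    ∀ (t : ℕ) (a b c d : Fin m),
      A a b * (A ^ t) c d - (A ^ t) c d * A a b =
        θ * ((if c = b then (A ^ t) a d else 0) - (if a = d then (A ^ t) c b else 0)) := by
  have hc2 : ∀ x y : R, x * (θ * y) = θ * (x * y) := by
    intro x y; rw [← mul_assoc, ← hc, mul_assoc]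
  intro t
  induction t with
  | zero =>
    intro a b c d
    simp only [pow_zero, Matrix.one_apply]
    split_ifs <;> simp_all
  | succ t ih =>
    intro a b c d
    have hms : (A ^ (t+1)) c d = ∑ k, (A ^ t) c k * A k d := by
      rw [pow_succ, Matrix.mul_apply]
    have hms2 : (A ^ (t+1)) a d = ∑ k, (A ^ t) a k * A k d := by
      rw [pow_succ, Matrix.mul_apply]
    have hms3 : (A ^ (t+1)) c b = ∑ k, (A ^ t) c k * A k b := by
      rw [pow_succ, Matrix.mul_apply]
    have expand : ∀ k : Fin m,
        A a b * ((A ^ t) c k * A k d) - ((A ^ t) c k * A k d) * A a b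
        = (θ * ((if c = b then (A ^ t) a k * A k d else 0))
          - θ * ((if a = k then (A ^ t) c b * A k d else 0)))
          + (θ * ((if k = b then (A ^ t) c k * A a d else 0))
          - θ * ((if a = d then (A ^ t) c k * A k b else 0))) := by
      intro k
      have step : A a b * ((A ^ t) c k * A k d) - ((A ^ t) c k * A k d) * A a b
          = (A a b * (A ^ t) c k - (A ^ t) c k * A a b) * A k d
            + (A ^ t) c k * (A a b * A k d - A k d * A a b) := by noncomm_ring
      rw [step, ih a b c k, hbase a b k d]
      simp only [mul_sub, sub_mul, ite_mul, mul_ite, zero_mul, mul_zero, hc2, mul_assoc]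
    calc A a b * (A ^ (t+1)) c d - (A ^ (t+1)) c d * A a b
        = ∑ k, (A a b * ((A ^ t) c k * A k d) - ((A ^ t) c k * A k d) * A a b) := by
          rw [hms, Finset.mul_sum, Finset.sum_mul, ← Finset.sum_sub_distrib]
      _ = ∑ k, ((θ * ((if c = b then (A ^ t) a k * A k d else 0))
          - θ * ((if a = k then (A ^ t) c b * A k d else 0)))
          + (θ * ((if k = b then (A ^ t) c k * A a d else 0))
          - θ * ((if a = d then (A ^ t) c k * A k b else 0)))) :=
          Finset.sum_congr rfl (fun k _ => expand k)
      _ = θ * ((if c = b then (A ^ (t+1)) a d else 0) - (if a = d then (A ^ (t+1)) c b else 0)) := by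
          rw [hms2, hms3]
          simp only [Finset.sum_add_distrib, Finset.sum_sub_distrib, ← Finset.mul_sum,
            Finset.sum_ite_eq, Finset.sum_ite_eq', Finset.mem_univ, if_true,
            Finset.sum_ite_irrel, Finset.sum_const_zero, mul_sub]
          abel

theorem key (θ : R) (hθ2 : θ * θ = 1) (hc : ∀ x : R, θ * x = x * θ)
    (A : Matrix (Fin m) (Fin m) R)
    (hbase : ∀ a b c d, A a b * A c d - A c d * A a b =
      θ * ((if c = b then A a d else 0) - (if a = d then A c b else 0))) :
    ∀ (r t : ℕ) (a b c d : Fin m),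
      ((A ^ (r + 1)) a b * (A ^ t) c d - (A ^ t) c d * (A ^ (r + 1)) a b) -
      ((A ^ r) a b * (A ^ (t + 1)) c d - (A ^ (t + 1)) c d * (A ^ r) a b) =
        θ * ((A ^ r) c b * (A ^ t) a d - (A ^ t) c b * (A ^ r) a d) := by
  have hc2 : ∀ x y : R, x * (θ * y) = θ * (x * y) := by
    intro x y; rw [← mul_assoc, ← hc, mul_assoc]
  have hL1 := L1 θ hc A hbase
  intro r
  induction r with
  | zero =>
    intro t a b c d
    simp only [pow_zero, pow_one, Matrix.one_apply, ite_mul, mul_ite, one_mul, mul_one,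
      mul_zero, zero_mul, sub_self, sub_zero, Nat.zero_add]
    exact hL1 t a b c d
  | succ r ih =>
    intro t a b c d
    -- matrix power commutation facts
    have hswap : ∀ (n n' : ℕ) (k : Fin m), θ * (A a k * ((A ^ n) c b * (A ^ n') k d))
        = θ * ((A ^ n) c b * (A a k * (A ^ n') k d))
          + ((if c = k then (A ^ n) a b * (A ^ n') k d else 0)
            - (if a = b then (A ^ n) c k * (A ^ n') k d else 0)) := by
      intro n n' k
      have h' : A a k * (A ^ n) c b = θ * ((if c = k then (A ^ n) a b else 0)
          - (if a = b then (A ^ n) c k else 0)) + (A ^ n) c b * A a k :=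
        sub_eq_iff_eq_add.mp (hL1 n a k c b)
      calc θ * (A a k * ((A ^ n) c b * (A ^ n') k d))
          = θ * ((A a k * (A ^ n) c b) * (A ^ n') k d) := by rw [mul_assoc]
        _ = θ * ((θ * ((if c = k then (A ^ n) a b else 0)
              - (if a = b then (A ^ n) c k else 0)) + (A ^ n) c b * A a k) * (A ^ n') k d) := by
            rw [h']
        _ = _ := by
            simp only [add_mul, sub_mul, ite_mul, zero_mul, mul_add, mul_sub, mul_ite, mul_zero,
              ← mul_assoc, hθ2, one_mul]
            abel
    have h1 : (A ^ (r + 1 + 1)) a b = ∑ k, A a k * (A ^ (r + 1)) k b := by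
      rw [pow_succ', Matrix.mul_apply]
    have h2 : (A ^ (r + 1)) a b = ∑ k, A a k * (A ^ r) k b := by
      rw [pow_succ', Matrix.mul_apply]
    have hsum1 : ∑ k, A a k * (A ^ t) k d = (A ^ (t + 1)) a d := by
      rw [pow_succ', Matrix.mul_apply]
    have hsum2 : ∑ k, A a k * (A ^ r) k d = (A ^ (r + 1)) a d := by
      rw [pow_succ', Matrix.mul_apply]
    have hsum3 : ∑ k, (A ^ r) c k * (A ^ t) k d = ∑ k, (A ^ t) c k * (A ^ r) k d := by
      have : (A ^ r * A ^ t) c d = (A ^ t * A ^ r) c d := by rw [pow_mul_comm]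
      simpa [Matrix.mul_apply] using this
    have hsum4 : ∑ k, (A ^ t) c k * (A ^ (r + 1)) k b
        = ∑ k, (A ^ (t + 1)) c k * (A ^ r) k b := by
      have : (A ^ t * A ^ (r + 1)) c b = (A ^ (t + 1) * A ^ r) c b := by
        rw [pow_succ', pow_succ, ← mul_assoc]
      simpa [Matrix.mul_apply] using this
    have hsub : (A ^ r) a b * (A ^ t) c d - (A ^ t) a b * (A ^ r) c d
        = θ * (((A ^ (r + 1)) c b * (A ^ t) a d - (A ^ t) a d * (A ^ (r + 1)) c b)
          - ((A ^ r) c b * (A ^ (t + 1)) a d - (A ^ (t + 1)) a d * (A ^ r) c b)) := by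
      have h := congrArg (fun x => θ * x) (ih t c b a d)
      simp only [← mul_assoc, hθ2, one_mul] at h
      exact h.symm
    calc ((A ^ (r + 1 + 1)) a b * (A ^ t) c d - (A ^ t) c d * (A ^ (r + 1 + 1)) a b)
          - ((A ^ (r + 1)) a b * (A ^ (t + 1)) c d - (A ^ (t + 1)) c d * (A ^ (r + 1)) a b)
        = ∑ k, ((A a k * (A ^ (r + 1)) k b) * (A ^ t) c d
              - (A ^ t) c d * (A a k * (A ^ (r + 1)) k b)
              - ((A a k * (A ^ r) k b) * (A ^ (t + 1)) c d
                - (A ^ (t + 1)) c d * (A a k * (A ^ r) k b))) := by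
          rw [h1, h2]
          simp only [Finset.sum_mul, Finset.mul_sum, ← Finset.sum_sub_distrib]
      _ = ∑ k, (A a k * (((A ^ (r + 1)) k b * (A ^ t) c d - (A ^ t) c d * (A ^ (r + 1)) k b)
              - ((A ^ r) k b * (A ^ (t + 1)) c d - (A ^ (t + 1)) c d * (A ^ r) k b))
            + (A a k * (A ^ t) c d - (A ^ t) c d * A a k) * (A ^ (r + 1)) k b
            - (A a k * (A ^ (t + 1)) c d - (A ^ (t + 1)) c d * A a k) * (A ^ r) k b) :=
          Finset.sum_congr rfl fun k _ => by noncomm_ring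
      _ = ∑ k, (A a k * (θ * ((A ^ r) c b * (A ^ t) k d - (A ^ t) c b * (A ^ r) k d))
            + (θ * ((if c = k then (A ^ t) a d else 0)
                - (if a = d then (A ^ t) c k else 0))) * (A ^ (r + 1)) k b
            - (θ * ((if c = k then (A ^ (t + 1)) a d else 0)
                - (if a = d then (A ^ (t + 1)) c k else 0))) * (A ^ r) k b) :=
          Finset.sum_congr rfl fun k _ => by
            rw [ih t k b c d, hL1 t a k c d, hL1 (t + 1) a k c d]
      _ = ∑ k, ((θ * ((A ^ r) c b * (A a k * (A ^ t) k d))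
              + ((if c = k then (A ^ r) a b * (A ^ t) k d else 0)
                - (if a = b then (A ^ r) c k * (A ^ t) k d else 0)))
            - (θ * ((A ^ t) c b * (A a k * (A ^ r) k d))
              + ((if c = k then (A ^ t) a b * (A ^ r) k d else 0)
                - (if a = b then (A ^ t) c k * (A ^ r) k d else 0)))
            + ((if c = k then θ * ((A ^ t) a d * (A ^ (r + 1)) k b) else 0)
              - (if a = d then θ * ((A ^ t) c k * (A ^ (r + 1)) k b) else 0))
            - ((if c = k then θ * ((A ^ (t + 1)) a d * (A ^ r) k b) else 0)
              - (if a = d then θ * ((A ^ (t + 1)) c k * (A ^ r) k b) else 0))) :=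
          Finset.sum_congr rfl fun k _ => by
            rw [hc2,
              show A a k * ((A ^ r) c b * (A ^ t) k d - (A ^ t) c b * (A ^ r) k d)
                = A a k * ((A ^ r) c b * (A ^ t) k d)
                  - A a k * ((A ^ t) c b * (A ^ r) k d) from mul_sub _ _ _,
              mul_sub θ, hswap r t k, hswap t r k]
            simp only [sub_mul, ite_mul, zero_mul, mul_sub, mul_ite, mul_zero, mul_assoc]
      _ = θ * ((A ^ r) c b * (A ^ (t + 1)) a d)
            + ((A ^ r) a b * (A ^ t) c d
              - (if a = b then ∑ k, (A ^ r) c k * (A ^ t) k d else 0))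
          - (θ * ((A ^ t) c b * (A ^ (r + 1)) a d)
            + ((A ^ t) a b * (A ^ r) c d
              - (if a = b then ∑ k, (A ^ t) c k * (A ^ r) k d else 0)))
          + (θ * ((A ^ t) a d * (A ^ (r + 1)) c b)
            - (if a = d then ∑ k, θ * ((A ^ t) c k * (A ^ (r + 1)) k b) else 0))
          - (θ * ((A ^ (t + 1)) a d * (A ^ r) c b)
            - (if a = d then ∑ k, θ * ((A ^ (t + 1)) c k * (A ^ r) k b) else 0)) := by
          simp only [Finset.sum_add_distrib, Finset.sum_sub_distrib, ← Finset.mul_sum,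
            Finset.sum_ite_eq, Finset.sum_ite_irrel, Finset.sum_const_zero,
            Finset.mem_univ, if_true, hsum1, hsum2]
      _ = θ * ((A ^ (r + 1)) c b * (A ^ t) a d - (A ^ t) c b * (A ^ (r + 1)) a d) := by
          have hsimp : ∀ f : Fin m → R,
              (∑ k, θ * f k) = θ * ∑ k, f k := fun f => (Finset.mul_sum _ f θ).symm
          rw [hsimp, hsimp, hsum3, hsum4]
          have h3 : (A ^ r) a b * (A ^ t) c d
              = θ * (((A ^ (r + 1)) c b * (A ^ t) a d - (A ^ t) a d * (A ^ (r + 1)) c b)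
                - ((A ^ r) c b * (A ^ (t + 1)) a d - (A ^ (t + 1)) a d * (A ^ r) c b))
                + (A ^ t) a b * (A ^ r) c d :=
            sub_eq_iff_eq_add.mp hsub
          rw [h3]
          noncomm_ring

end

/-- Coefficient form of Proposition A.1(ii): the entries of powers of the matrix
`A` with `A_{ab} = -θ e_{ba}` satisfy the Yangian-type relation
`[(A^{r+1})_{ab}, (A^t)_{cd}] − [(A^r)_{ab}, (A^{t+1})_{cd}]
  = θ ((A^r)_{cb}(A^t)_{ad} − (A^t)_{cb}(A^r)_{ad})`. -/
theorem X_yangian_coeff {R : Type*} [Ring R] (m : ℕ) (θ : R) (hθ : θ = 1 ∨ θ = -1)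
    (e : Fin m → Fin m → R)
    (he : ∀ a b c d, e a b * e c d - e c d * e a b =
      (if b = c then e a d else 0) - (if d = a then e c b else 0))
    (A : Matrix (Fin m) (Fin m) R) (hA : ∀ a b, A a b = -(θ * e b a)) :
    ∀ (r t : ℕ) (a b c d : Fin m),
      ((A ^ (r + 1)) a b * (A ^ t) c d - (A ^ t) c d * (A ^ (r + 1)) a b) -
      ((A ^ r) a b * (A ^ (t + 1)) c d - (A ^ (t + 1)) c d * (A ^ r) a b) =
        θ * ((A ^ r) c b * (A ^ t) a d - (A ^ t) c b * (A ^ r) a d) := by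
  obtain rfl | rfl := hθ
  · refine key (1 : R) (by simp) (fun x => by simp) A ?_
    intro a b c d
    rw [hA, hA, hA, hA]
    have h := he b a d c
    simp only [one_mul, neg_mul_neg]
    rw [h]
    split_ifs <;> abel
  · refine key (-1 : R) (by simp) (fun x => by simp) A ?_
    intro a b c d
    rw [hA, hA, hA, hA]
    have h := he b a d c
    simp only [neg_one_mul, neg_neg, neg_mul_neg]
    rw [h]
    split_ifs <;> simp
end
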